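/- Let n ≥ 1, let z_1, ..., z_n be i.i.d. rate-1 exponential random variables, λ > 0, and r_1, ..., r_n ≥ 0. Let R_n = Σ r_i and S_n = Σ (2^{r_i}−1). Then the non-outage probability P(Σ_{i∈M} z_i ≥ λ(2^{Σ_{i∈M} r_i} − 1) for every nonempty M ⊆ {1,...,n}) is at most e^{-λS_n} · Γ(n, λ(2^{R_n}−1−S_n))/(n−1)!, where Γ(n,x) = (n−1)! e^{-x} Σ_{k=0}^{n-1} x^k/k! is the upper incomplete gamma function; equivalently it is at most e^{-λ(2^{R_n}−1)} Σ_{k=0}^{n-1} (λ(2^{R_n}−1−S_n))^k/k!. -/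

import Mathlib

/-!
Keeping only the single-link constraints `λ(2^{r_i} - 1) ≤ z_i` and the full-sum constraint
enlarges the event. By memorylessness, i.i.d. Exp(1) variables restricted to `z ≥ a` are the
same variables shifted by `a`, up to the factor `e^{-∑ a_i}`. What remains is the Erlang(n, 1)
tail `P(w_1 + ⋯ + w_n ≥ x)` at `x = λ(2^{R_n} - 1 - S_n)`, which is `≥ 0` since `t ↦ 2^t - 1` is
superadditive on `[0, ∞)`; the tail is computed by induction on `n`, integrating out one
coordinate.
-/

open MeasureTheory ProbabilityTheory Real

/-- The product measure of `n` i.i.d. rate-1 exponential random variables. -/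
noncomputable def iidExp (ι : Type*) [Fintype ι] : Measure (ι → ℝ) :=
  haveI : IsProbabilityMeasure (expMeasure 1) := isProbabilityMeasure_expMeasure one_pos
  Measure.pi fun _ => expMeasure 1

open Set ENNReal Nat

instance isProbabilityMeasure_expMeasure_one : IsProbabilityMeasure (expMeasure 1) :=
  isProbabilityMeasure_expMeasure one_pos

lemma expMeasure_one_eq_withDensity :
    expMeasure 1 = volume.withDensity ((Ici 0).indicator fun t ↦ ENNReal.ofReal (exp (-t))) := by
  change volume.withDensity (exponentialPDF 1) = _
  congr 1
  ext t
  by_cases ht : 0 ≤ t <;> simp [exponentialPDF_eq, ht]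

lemma lintegral_expMeasure_one (f : ℝ → ℝ≥0∞) :
    ∫⁻ t, f t ∂expMeasure 1 = ∫⁻ t in Ici 0, ENNReal.ofReal (exp (-t)) * f t := by
  rw [expMeasure_one_eq_withDensity, withDensity_indicator measurableSet_Ici,
    lintegral_withDensity_eq_lintegral_mul_non_measurable _ (by fun_prop)
      (.of_forall fun _ ↦ ofReal_lt_top)]
  rfl

lemma setLIntegral_ofReal_exp_neg_Ici (a : ℝ) :
    ∫⁻ t in Ici a, ENNReal.ofReal (exp (-t)) = ENNReal.ofReal (exp (-a)) := by
  rw [← setLIntegral_congr Ioi_ae_eq_Ici, ← ofReal_integral_eq_lintegral_ofReal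
    (integrableOn_exp_neg_Ioi a) (.of_forall fun _ ↦ exp_nonneg _), integral_exp_neg_Ioi]

lemma expMeasure_one_restrict_Ici {a : ℝ} (ha : 0 ≤ a) :
    (expMeasure 1).restrict (Ici a) =
      ENNReal.ofReal (exp (-a)) • (expMeasure 1).map (· + a) := by
  ext s hs
  rw [Measure.restrict_apply hs, inter_comm, Measure.smul_apply,
    Measure.map_apply (measurable_add_const a) hs, smul_eq_mul, expMeasure_one_eq_withDensity,
    withDensity_apply _ (measurableSet_Ici.inter hs),
    withDensity_apply _ (measurable_add_const a hs)]
  set g : ℝ → ℝ≥0∞ := (Ici 0).indicator fun t ↦ ENNReal.ofReal (exp (-t))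
  have hg : Measurable g := by unfold g; fun_prop (disch := measurability)
  have shift : (Ici a).indicator g = fun t ↦ ENNReal.ofReal (exp (-a)) * g (t - a) := by
    ext t
    by_cases ht : a ≤ t
    · simp only [g, indicator_of_mem (show t ∈ Ici a from ht),
        indicator_of_mem (show t ∈ Ici 0 from ha.trans ht),
        indicator_of_mem (show t - a ∈ Ici 0 by simpa using ht), ← ofReal_mul (exp_nonneg _),
        ← exp_add]
      ring_nf
    · simp only [g, indicator_of_notMem (show t ∉ Ici a from ht),
        indicator_of_notMem (show t - a ∉ Ici 0 by simpa using ht), mul_zero]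
  rw [← setLIntegral_indicator measurableSet_Ici, shift]
  beta_reduce
  rw [lintegral_const_mul' _ _ ofReal_ne_top,
    ← (measurePreserving_add_right volume a).setLIntegral_comp_preimage hs
      (f := fun t ↦ g (t - a)) (hg.comp (measurable_sub_const a))]
  simp

instance (ι : Type*) [Fintype ι] : IsProbabilityMeasure (iidExp ι) := by
  unfold iidExp; infer_instance

lemma iidExp_restrict_Ici {ι : Type*} [Fintype ι] {a : ι → ℝ} (ha : 0 ≤ a) :
    (iidExp ι).restrict (Ici a) =
      ENNReal.ofReal (exp (-∑ i, a i)) • (iidExp ι).map (· + a) := by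
  rw [← pi_univ_Ici, iidExp, Measure.restrict_pi_pi]
  refine Measure.pi_eq fun s hs ↦ ?_
  have hpre : (· + a) ⁻¹' univ.pi s = univ.pi fun i ↦ (· + a i) ⁻¹' s i := by ext; simp
  simp_rw [expMeasure_one_restrict_Ici (ha _), Measure.smul_apply, smul_eq_mul,
    Measure.map_apply (measurable_add_const a) (.univ_pi hs), hpre,
    Measure.map_apply (measurable_add_const _) (hs _), Measure.pi_pi, Finset.prod_mul_distrib,
    ← ENNReal.ofReal_prod_of_nonneg fun i _ ↦ exp_nonneg _, ← exp_sum, Finset.sum_neg_distrib]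

/-- The branch `x ≤ 0` is the tail of the empty sum when `n = 0`; for `n ≥ 1` it agrees with the
formula at `x = 0`. -/
noncomputable def erlangTail (n : ℕ) (x : ℝ) : ℝ :=
  if x ≤ 0 then 1 else exp (-x) * ∑ k ∈ Finset.range n, x ^ k / k !

lemma erlangTail_of_nonpos {n : ℕ} {x : ℝ} (hx : x ≤ 0) : erlangTail n x = 1 := if_pos hx

lemma erlangTail_of_pos {n : ℕ} {x : ℝ} (hx : 0 < x) :
    erlangTail n x = exp (-x) * ∑ k ∈ Finset.range n, x ^ k / k ! := if_neg hx.not_ge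

lemma erlangTail_of_nonneg {n : ℕ} (hn : n ≠ 0) {x : ℝ} (hx : 0 ≤ x) :
    erlangTail n x = exp (-x) * ∑ k ∈ Finset.range n, x ^ k / k ! := by
  rcases hx.lt_or_eq with hx | rfl
  · exact erlangTail_of_pos hx
  · obtain ⟨m, rfl⟩ := Nat.exists_eq_succ_of_ne_zero hn
    simp [erlangTail, Finset.sum_range_succ']

lemma integral_sub_pow_div_factorial (x : ℝ) (k : ℕ) :
    ∫ t in 0..x, (x - t) ^ k / k ! = x ^ (k + 1) / (k + 1)! := by
  rw [intervalIntegral.integral_div, intervalIntegral.integral_comp_sub_left (· ^ k), sub_self,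
    sub_zero, integral_pow, Nat.factorial_succ]
  push_cast
  field_simp
  ring

lemma setLIntegral_exp_neg_mul_erlangTail (n : ℕ) (x : ℝ) :
    ∫⁻ t in Ici 0, ENNReal.ofReal (exp (-t)) * ENNReal.ofReal (erlangTail n (x - t)) =
      ENNReal.ofReal (erlangTail (n + 1) x) := by
  have beyond (a : ℝ) (ha : x ≤ a) :
      ∫⁻ t in Ici a, ENNReal.ofReal (exp (-t)) * ENNReal.ofReal (erlangTail n (x - t)) =
        ENNReal.ofReal (exp (-a)) := by
    rw [← setLIntegral_ofReal_exp_neg_Ici]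
    refine setLIntegral_congr_fun measurableSet_Ici fun t ht ↦ ?_
    rw [erlangTail_of_nonpos (by linarith [mem_Ici.mp ht]), ofReal_one, mul_one]
  rcases le_or_gt x 0 with hx | hx
  · rw [beyond 0 hx, erlangTail_of_nonpos hx, neg_zero, exp_zero]
  have hpoly : Continuous fun t ↦ exp (-x) * ∑ k ∈ Finset.range n, (x - t) ^ k / k ! := by
    fun_prop
  have before :
      ∫⁻ t in Ico 0 x, ENNReal.ofReal (exp (-t)) * ENNReal.ofReal (erlangTail n (x - t)) =
        ENNReal.ofReal (exp (-x) * ∑ k ∈ Finset.range n, x ^ (k + 1) / (k + 1)!) := by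
    rw [setLIntegral_congr_fun measurableSet_Ico fun t ht ↦ by
        rw [erlangTail_of_pos (sub_pos.mpr ht.2), ← ofReal_mul (exp_nonneg _), ← mul_assoc,
          ← exp_add, show -t + -(x - t) = -x by ring],
      setLIntegral_congr Ico_ae_eq_Ioc, ← ofReal_integral_eq_lintegral_ofReal
        hpoly.integrableOn_Ioc, ← intervalIntegral.integral_of_le hx.le,
      intervalIntegral.integral_const_mul, intervalIntegral.integral_finsetSum
        fun k _ ↦ (by fun_prop : Continuous fun t ↦ (x - t) ^ k / k !).intervalIntegrable _ _]
    · simp_rw [integral_sub_pow_div_factorial]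
    · exact ae_restrict_of_forall_mem measurableSet_Ioc fun t ht ↦ mul_nonneg (exp_nonneg _)
        (Finset.sum_nonneg fun k _ ↦ by have := sub_nonneg.mpr ht.2; positivity)
  rw [← Ico_union_Ici_eq_Ici hx.le,
    lintegral_union measurableSet_Ici ((Iio_disjoint_Ici le_rfl).mono_left Ico_subset_Iio_self),
    before, beyond x le_rfl, ← ofReal_add, erlangTail_of_pos hx, Finset.sum_range_succ']
  · simp [mul_add]
  · exact mul_nonneg (exp_nonneg _) (Finset.sum_nonneg fun k _ ↦ by have := hx.le; positivity)
  · exact exp_nonneg _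

lemma iidExp_setOf_le_sum (n : ℕ) (x : ℝ) :
    iidExp (Fin n) {w | x ≤ ∑ i, w i} = ENNReal.ofReal (erlangTail n x) := by
  induction n generalizing x with
  | zero =>
    rcases le_or_gt x 0 with hx | hx
    · simp [hx, erlangTail_of_nonpos]
    · simp [hx.not_ge, erlangTail_of_pos hx]
  | succ n ih =>
    have hpre : {w : Fin (n + 1) → ℝ | x ≤ ∑ i, w i} =
        MeasurableEquiv.piFinSuccAbove (fun _ ↦ ℝ) 0 ⁻¹' {p | x ≤ p.1 + ∑ i, p.2 i} := by
      ext w; simp [Fin.sum_univ_succ, Fin.tail]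
    have hmeas : MeasurableSet {p : ℝ × (Fin n → ℝ) | x ≤ p.1 + ∑ i, p.2 i} :=
      measurableSet_le measurable_const (by fun_prop)
    have hslice (t : ℝ) : Prod.mk t ⁻¹' {p : ℝ × (Fin n → ℝ) | x ≤ p.1 + ∑ i, p.2 i} =
        {w | x - t ≤ ∑ i, w i} := by
      ext w; simp [add_comm]
    rw [hpre, iidExp,
      (measurePreserving_piFinSuccAbove (fun _ ↦ expMeasure 1) 0).measure_preimage_equiv,
      Measure.prod_apply hmeas]
    change ∫⁻ t, iidExp (Fin n) _ ∂expMeasure 1 = _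
    simp_rw [hslice, ih]
    rw [lintegral_expMeasure_one, setLIntegral_exp_neg_mul_erlangTail]

lemma iidExp_Ici_inter_setOf_le_sum {n : ℕ} {a : Fin n → ℝ} (ha : 0 ≤ a) (b : ℝ) :
    iidExp (Fin n) (Ici a ∩ {z | b ≤ ∑ i, z i}) =
      ENNReal.ofReal (exp (-∑ i, a i) * erlangTail n (b - ∑ i, a i)) := by
  have hmeas : MeasurableSet {z : Fin n → ℝ | b ≤ ∑ i, z i} :=
    measurableSet_le measurable_const (by fun_prop)
  have hpre : (· + a) ⁻¹' {z | b ≤ ∑ i, z i} = {w | b - ∑ i, a i ≤ ∑ i, w i} := by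
    ext w; simp [Finset.sum_add_distrib]
  rw [inter_comm, ← Measure.restrict_apply hmeas, iidExp_restrict_Ici ha, Measure.smul_apply,
    Measure.map_apply (measurable_add_const a) hmeas, hpre, iidExp_setOf_le_sum, smul_eq_mul,
    ofReal_mul (exp_nonneg _)]

lemma sum_rpow_sub_one_le {ι : Type*} (s : Finset ι) {b : ℝ} (hb : 1 ≤ b) {r : ι → ℝ}
    (hr : ∀ i ∈ s, 0 ≤ r i) : ∑ i ∈ s, (b ^ r i - 1) ≤ b ^ (∑ i ∈ s, r i) - 1 := by
  induction s using Finset.cons_induction with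
  | empty => simp
  | cons j s hj ih =>
    rw [Finset.sum_cons, Finset.sum_cons, rpow_add (by linarith)]
    have hj1 : 1 ≤ b ^ r j := one_le_rpow hb (hr j (Finset.mem_cons_self j s))
    have hs1 : 1 ≤ b ^ ∑ i ∈ s, r i :=
      one_le_rpow hb (Finset.sum_nonneg fun i hi ↦ hr i (Finset.mem_cons_of_mem hi))
    nlinarith [ih fun i hi ↦ hr i (Finset.mem_cons_of_mem hi)]

/-- Upper bound on the non-outage probability of an $n$-link i.i.d. Rayleigh MAC:
$P(\text{non-outage}) \le e^{-\lambda(2^{R_n}-1)}\sum_{k=0}^{n-1}(\lambda(2^{R_n}-1-S_n))^k/k!$,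
i.e. $e^{-\lambda S_n}\Gamma(n, \lambda(2^{R_n}-1-S_n))/(n-1)!$. -/
theorem macn_nonoutage_upper (n : ℕ) (hn : 1 ≤ n) (lam : ℝ) (hlam : 0 < lam)
    (r : Fin n → ℝ) (hr : ∀ i, 0 ≤ r i) :
    iidExp (Fin n) {z | ∀ M : Finset (Fin n), M.Nonempty →
        lam * ((2 : ℝ) ^ (∑ i ∈ M, r i) - 1) ≤ ∑ i ∈ M, z i}
      ≤ ENNReal.ofReal (Real.exp (-(lam * ((2 : ℝ) ^ (∑ i, r i) - 1)))
          * ∑ k ∈ Finset.range n,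
              (lam * ((2 : ℝ) ^ (∑ i, r i) - 1 - ∑ i, ((2 : ℝ) ^ r i - 1))) ^ k
                / (Nat.factorial k)) := by
  set a : Fin n → ℝ := fun i ↦ lam * ((2 : ℝ) ^ r i - 1)
  set b := lam * ((2 : ℝ) ^ (∑ i, r i) - 1)
  have ha : 0 ≤ a := fun i ↦ mul_nonneg hlam.le (by linarith [one_le_rpow one_le_two (hr i)])
  have hsum : ∑ i, a i = lam * ∑ i, ((2 : ℝ) ^ r i - 1) := (Finset.mul_sum ..).symm
  have hgap : 0 ≤ b - ∑ i, a i := by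
    rw [hsum, ← mul_sub]
    exact mul_nonneg hlam.le (sub_nonneg.mpr (sum_rpow_sub_one_le _ one_le_two fun i _ ↦ hr i))
  have hsub : {z : Fin n → ℝ | ∀ M : Finset (Fin n), M.Nonempty →
      lam * ((2 : ℝ) ^ (∑ i ∈ M, r i) - 1) ≤ ∑ i ∈ M, z i} ⊆ Ici a ∩ {z | b ≤ ∑ i, z i} :=
    fun z hz ↦ ⟨fun i ↦ by simpa using hz {i} (Finset.singleton_nonempty i),
      hz Finset.univ ⟨⟨0, hn⟩, Finset.mem_univ _⟩⟩
  refine (measure_mono hsub).trans_eq ?_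
  rw [iidExp_Ici_inter_setOf_le_sum ha, erlangTail_of_nonneg (by omega) hgap, ← mul_assoc,
    ← exp_add, show -∑ i, a i + -(b - ∑ i, a i) = -b by ring, hsum, mul_sub]
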